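/- Every dendriform trialgebra A over a field embeds into an associative algebra B carrying a Rota–Baxter operator R of weight 1, via an injective linear map ι: A → B such that ι(a≻b) = R(ι(a))ι(b), ι(a≺b) = ι(a)R(ι(b)), and ι(a·b) = ι(a)ι(b). Concretely one may take B = Â = A ⊕ A′ with the trialgebra doubling product, R(a′) = a, R(a) = −a, and ι(a) = a′. -/

import Mathlib

/-!
The doubling product is associative componentwise. On the `A`-component it is the total
product `≺ + ≻ + ·`, which is associative because the seven axioms sum to its associativity.
On the `A′`-component each of the seven terms of `((x ∘ y) ∘ z)′` is matched with a term of
`(x ∘ (y ∘ z))′` by exactly one axiom. The Rota–Baxter identity holds for arbitrary bilinear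
`≺, ≻, ·`: for `x = a + b′` and `y = c + e′` both of its sides expand to `(b - a) ∘ (e - c)`.
-/

structure IsDendriformTrialgebra {K A : Type*} [CommSemiring K] [AddCommMonoid A] [Module K A]
    (p s d : A →ₗ[K] A →ₗ[K] A) : Prop where
  prec_prec : ∀ x y z : A, p (p x y) z = p x (p y z + s y z + d y z)
  succ_prec : ∀ x y z : A, p (s x y) z = s x (p y z)
  total_succ : ∀ x y z : A, s (p x y + s x y + d x y) z = s x (s y z)
  succ_dot : ∀ x y z : A, d (s x y) z = s x (d y z)
  prec_dot : ∀ x y z : A, d (p x y) z = d x (s y z)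
  dot_prec : ∀ x y z : A, p (d x y) z = d x (p y z)
  dot_dot : ∀ x y z : A, d (d x y) z = d x (d y z)

namespace IsDendriformTrialgebra

variable {K A : Type*} [CommSemiring K] [AddCommMonoid A] [Module K A]
  {p s d : A →ₗ[K] A →ₗ[K] A}

theorem succ_succ (h : IsDendriformTrialgebra p s d) (x y z : A) :
    s x (s y z) = s (p x y) z + s (s x y) z + s (d x y) z := by
  rw [← h.total_succ, map_add, map_add, LinearMap.add_apply, LinearMap.add_apply]

theorem total_assoc (h : IsDendriformTrialgebra p s d) (x y z : A) :
    (p + s + d) ((p + s + d) x y) z = (p + s + d) x ((p + s + d) y z) := by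
  simp only [LinearMap.add_apply, map_add, h.prec_prec, h.succ_prec, h.dot_prec, h.prec_dot,
    h.succ_dot, h.dot_dot, h.succ_succ x y z]
  abel

end IsDendriformTrialgebra

section Doubling

variable {K A : Type*} [CommSemiring K]

/-- The product of `A ⊕ A′`, where `(a, b) : A × A` stands for `a + b′`. -/
def doublingMul [AddCommMonoid A] [Module K A] (p s d : A →ₗ[K] A →ₗ[K] A) (x y : A × A) :
    A × A :=
  (p x.1 y.1 + s x.1 y.1 + d x.1 y.1, s x.1 y.2 + p x.2 y.1 + d x.2 y.2)

def doublingRotaBaxter [AddCommGroup A] (x : A × A) : A × A :=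
  (x.2 - x.1, 0)

theorem doublingMul_assoc [AddCommMonoid A] [Module K A] {p s d : A →ₗ[K] A →ₗ[K] A}
    (h : IsDendriformTrialgebra p s d) (x y z : A × A) :
    doublingMul p s d (doublingMul p s d x y) z = doublingMul p s d x (doublingMul p s d y z) := by
  refine Prod.ext ?_ ?_
  · simpa only [doublingMul, LinearMap.add_apply] using h.total_assoc x.1 y.1 z.1
  · simp only [doublingMul, map_add, LinearMap.add_apply, h.prec_prec, h.succ_prec, h.dot_prec,
      h.prec_dot, h.succ_dot, h.dot_dot, h.succ_succ x.1 y.1 z.2]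
    abel

theorem doublingMul_isRotaBaxter [AddCommGroup A] [Module K A] (p s d : A →ₗ[K] A →ₗ[K] A)
    (x y : A × A) :
    doublingMul p s d (doublingRotaBaxter x) (doublingRotaBaxter y) =
      doublingRotaBaxter (doublingMul p s d x (doublingRotaBaxter y) +
        doublingMul p s d (doublingRotaBaxter x) y + doublingMul p s d x y) := by
  simp only [doublingMul, doublingRotaBaxter, Prod.mk.injEq, map_sub, map_zero,
    LinearMap.sub_apply, LinearMap.zero_apply, Prod.fst_add, Prod.snd_add]
  constructor <;> abel

variable [AddCommGroup A] [Module K A] (p s d : A →ₗ[K] A →ₗ[K] A) (a b : A)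

theorem inr_succ :
    ((0 : A), s a b) = doublingMul p s d (doublingRotaBaxter (0, a)) (0, b) := by
  simp [doublingMul, doublingRotaBaxter]

theorem inr_prec :
    ((0 : A), p a b) = doublingMul p s d (0, a) (doublingRotaBaxter (0, b)) := by
  simp [doublingMul, doublingRotaBaxter]

theorem inr_dot : ((0 : A), d a b) = doublingMul p s d (0, a) (0, b) := by
  simp [doublingMul]

end Doubling

/-- Every dendriform trialgebra (A, ≺, ≻, ·) embeds into an
associative algebra with a Rota–Baxter operator of weight 1: take Â = A ⊕ A'
with the doubling product, R(a') = a, R(a) = -a, ι(a) = a'.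
An element (a, b) of A × A represents a + b'. -/
theorem stmt6 {K A : Type*} [Field K] [AddCommGroup A] [Module K A]
    (p s d : A →ₗ[K] A →ₗ[K] A)
    (h1 : ∀ x y z : A, p (p x y) z = p x (p y z + s y z + d y z))
    (h2 : ∀ x y z : A, p (s x y) z = s x (p y z))
    (h3 : ∀ x y z : A, s (p x y + s x y + d x y) z = s x (s y z))
    (h4 : ∀ x y z : A, d (s x y) z = s x (d y z))
    (h5 : ∀ x y z : A, d (p x y) z = d x (s y z))
    (h6 : ∀ x y z : A, p (d x y) z = d x (p y z))
    (h7 : ∀ x y z : A, d (d x y) z = d x (d y z))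
    (mul : A × A → A × A → A × A)
    (hmul : ∀ x y : A × A,
      mul x y = (p x.1 y.1 + s x.1 y.1 + d x.1 y.1,
                 s x.1 y.2 + p x.2 y.1 + d x.2 y.2))
    (R : A × A → A × A)
    (hR : ∀ x : A × A, R x = (x.2 - x.1, 0))
    (iota : A → A × A)
    (hiota : ∀ a : A, iota a = (0, a)) :
    (∀ x y z : A × A, mul (mul x y) z = mul x (mul y z)) ∧
    (∀ x y : A × A, mul (R x) (R y) = R (mul x (R y) + mul (R x) y + mul x y)) ∧
    Function.Injective iota ∧ IsLinearMap K iota ∧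
    (∀ a b : A, iota (s a b) = mul (R (iota a)) (iota b)) ∧
    (∀ a b : A, iota (p a b) = mul (iota a) (R (iota b))) ∧
    (∀ a b : A, iota (d a b) = mul (iota a) (iota b)) := by
  obtain rfl : mul = doublingMul p s d := funext fun x => funext (hmul x)
  obtain rfl : R = doublingRotaBaxter := funext hR
  obtain rfl : iota = LinearMap.inr K A A := funext hiota
  exact ⟨doublingMul_assoc ⟨h1, h2, h3, h4, h5, h6, h7⟩, doublingMul_isRotaBaxter p s d,
    LinearMap.inr_injective, (LinearMap.inr K A A).isLinear, inr_succ p s d, inr_prec p s d,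
    inr_dot p s d⟩
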